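/- arXiv:2603.27919 — 3 statements merged into one kernel-verified Lean document; each statement's English description precedes it below -/
import Mathlib

section
/- Let A, B, C > 0 and real numbers a, p, b with 0 < a < p < b. Define Φ(s) := (s^p/p)A − μ(s^a/a')B' − (s^b/b')C' where a' , b' are positive constants and μ > 0, and suppose Φ'(s) = s^{p−1}A − μ α s^{a−1}B − β s^{b−1}C with α, β > 0. Then the equation Φ'(s) = 0 has: exactly two solutions 0 < s₊ < s₋ if μαB < max_{s>0}(s^{p−a}A − β s^{b−a}C); exactly one solution if equality holds; and no solution if μαB exceeds this maximum. -/
/-!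
For `s > 0` we have `Φ'(s) = s^{a-1} (h(s) - μαB)` with `h(s) = s^{p-a} A - β s^{b-a} C`, so the
critical points of `Φ` are the solutions of `h(s) = μαB`. Writing `k = p - a < m = b - a`,
`h'(s) = s^{k-1} (k A - m βC s^{m-k})` changes sign exactly once, so `h` increases from `h(0) = 0`
to its maximum and then decreases to `-∞`. The intermediate value theorem on each monotone branch
gives the count of solutions of `h(s) = μαB > 0`.
-/

open Set Filter Topology

section Unimodal

variable {g : ℝ → ℝ} {s₀ c : ℝ}

theorem isGreatest_image_Ioi_of_strictMonoOn_of_strictAntiOn (hs₀ : 0 < s₀)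
    (hmono : StrictMonoOn g (Icc 0 s₀)) (hanti : StrictAntiOn g (Ici s₀)) :
    IsGreatest (g '' Ioi 0) (g s₀) := by
  refine ⟨⟨s₀, hs₀, rfl⟩, ?_⟩
  rintro _ ⟨s, hs, rfl⟩
  rcases le_total s s₀ with h | h
  · exact hmono.monotoneOn ⟨hs.le, h⟩ ⟨hs₀.le, le_rfl⟩ h
  · exact hanti.antitoneOn self_mem_Ici h h

theorem eq_of_strictMonoOn_of_strictAntiOn_of_eq {s : ℝ} (hs : 0 ≤ s)
    (hmono : StrictMonoOn g (Icc 0 s₀)) (hanti : StrictAntiOn g (Ici s₀)) (h : g s = g s₀) :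
    s = s₀ := by
  rcases lt_trichotomy s s₀ with hlt | heq | hgt
  · exact absurd h (hmono ⟨hs, hlt.le⟩ ⟨hs.trans hlt.le, le_rfl⟩ hlt).ne
  · exact heq
  · exact absurd h (hanti self_mem_Ici hgt.le hgt).ne

theorem exists_two_eq_of_strictMonoOn_of_strictAntiOn (hs₀ : 0 ≤ s₀)
    (hcont : ContinuousOn g (Ici 0)) (hmono : StrictMonoOn g (Icc 0 s₀))
    (hanti : StrictAntiOn g (Ici s₀)) (hbot : Tendsto g atTop atBot) (h0 : g 0 < c)
    (hc : c < g s₀) :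
    ∃ s₁ s₂ : ℝ, 0 < s₁ ∧ s₁ < s₂ ∧ g s₁ = c ∧ g s₂ = c ∧
      ∀ s, 0 < s → g s = c → s = s₁ ∨ s = s₂ := by
  obtain ⟨s₁, ⟨hs₁0, hs₁s₀⟩, hgs₁⟩ :=
    intermediate_value_Icc hs₀ (hcont.mono Icc_subset_Ici_self) ⟨h0.le, hc.le⟩
  obtain ⟨T, hgT, hT⟩ := ((hbot.eventually (eventually_lt_atBot c)).and
    (eventually_ge_atTop s₀)).exists
  obtain ⟨s₂, ⟨hs₀s₂, hs₂T⟩, hgs₂⟩ :=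
    intermediate_value_Icc' hT (hcont.mono fun x hx => hs₀.trans hx.1) ⟨hgT.le, hc.le⟩
  have hs₁pos : 0 < s₁ := hs₁0.lt_of_ne (by rintro rfl; exact h0.ne hgs₁)
  have hs₁lt : s₁ < s₀ := hs₁s₀.lt_of_ne (by rintro rfl; exact hc.ne' hgs₁)
  have hlts₂ : s₀ < s₂ := hs₀s₂.lt_of_ne (by rintro rfl; exact hc.ne' hgs₂)
  refine ⟨s₁, s₂, hs₁pos, hs₁lt.trans hlts₂, hgs₁, hgs₂, fun s hs hgs => ?_⟩
  rcases le_total s s₀ with h | h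
  · exact .inl (hmono.injOn ⟨hs.le, h⟩ ⟨hs₁0, hs₁s₀⟩ (hgs.trans hgs₁.symm))
  · exact .inr (hanti.injOn h hs₀s₂ (hgs.trans hgs₂.symm))

end Unimodal

section RpowSubRpow

variable {k m A D : ℝ}

theorem continuous_rpow_mul_sub_rpow_mul (hk : 0 ≤ k) (hm : 0 ≤ m) :
    Continuous fun s : ℝ => s ^ k * A - s ^ m * D :=
  ((Real.continuous_rpow_const hk).mul continuous_const).sub
    ((Real.continuous_rpow_const hm).mul continuous_const)

theorem hasDerivAt_rpow_mul_sub_rpow_mul {s : ℝ} (hs : 0 < s) :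
    HasDerivAt (fun s : ℝ => s ^ k * A - s ^ m * D)
      (s ^ (k - 1) * (k * A - m * D * s ^ (m - k))) s := by
  have hk := (Real.hasDerivAt_rpow_const (p := k) (.inl hs.ne')).mul_const A
  have hm := (Real.hasDerivAt_rpow_const (p := m) (.inl hs.ne')).mul_const D
  refine (hk.sub hm).congr_deriv ?_
  rw [show m - 1 = (k - 1) + (m - k) by ring, Real.rpow_add hs]
  ring

theorem exists_strictMonoOn_strictAntiOn_rpow_mul_sub_rpow_mul (hk : 0 < k) (hkm : k < m)
    (hA : 0 < A) (hD : 0 < D) :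
    ∃ s₀, 0 < s₀ ∧ StrictMonoOn (fun s : ℝ => s ^ k * A - s ^ m * D) (Icc 0 s₀) ∧
      StrictAntiOn (fun s : ℝ => s ^ k * A - s ^ m * D) (Ici s₀) := by
  have hmk : 0 < m - k := sub_pos.2 hkm
  have hmD : 0 < m * D := mul_pos (hk.trans hkm) hD
  have hR : 0 < k * A / (m * D) := by positivity
  set s₀ := (k * A / (m * D)) ^ (m - k)⁻¹
  have hs₀ : 0 < s₀ := Real.rpow_pos_of_pos hR _
  have hcrit : m * D * s₀ ^ (m - k) = k * A := by
    rw [Real.rpow_inv_rpow hR.le hmk.ne', mul_div_cancel₀ _ hmD.ne']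
  have hcont : Continuous fun s : ℝ => s ^ k * A - s ^ m * D :=
    continuous_rpow_mul_sub_rpow_mul hk.le (hk.trans hkm).le
  refine ⟨s₀, hs₀, strictMonoOn_of_deriv_pos (convex_Icc _ _) hcont.continuousOn fun s hs => ?_,
    strictAntiOn_of_deriv_neg (convex_Ici _) hcont.continuousOn fun s hs => ?_⟩
  · rw [interior_Icc] at hs
    rw [(hasDerivAt_rpow_mul_sub_rpow_mul hs.1).deriv]
    have hlt := mul_lt_mul_of_pos_left (Real.rpow_lt_rpow hs.1.le hs.2 hmk) hmD
    exact mul_pos (Real.rpow_pos_of_pos hs.1 _) (by linarith)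
  · rw [interior_Ici] at hs
    have hs0 : 0 < s := hs₀.trans hs
    rw [(hasDerivAt_rpow_mul_sub_rpow_mul hs0).deriv]
    have hgt := mul_lt_mul_of_pos_left (Real.rpow_lt_rpow hs₀.le hs hmk) hmD
    exact mul_neg_of_pos_of_neg (Real.rpow_pos_of_pos hs0 _) (by linarith)

theorem tendsto_rpow_mul_sub_rpow_mul_atBot (hk : 0 < k) (hkm : k < m) (hD : 0 < D) :
    Tendsto (fun s : ℝ => s ^ k * A - s ^ m * D) atTop atBot := by
  have hfactor : (fun s : ℝ => s ^ k * (A - D * s ^ (m - k))) =ᶠ[atTop]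
      fun s => s ^ k * A - s ^ m * D := by
    filter_upwards [eventually_gt_atTop 0] with s hs
    rw [show m = k + (m - k) by ring, Real.rpow_add hs, add_sub_cancel_left]
    ring
  refine Tendsto.congr' hfactor ((tendsto_rpow_atTop hk).atTop_mul_atBot₀ ?_)
  exact tendsto_atBot_add_const_left _ A
    (tendsto_neg_atTop_atBot.comp ((tendsto_rpow_atTop (sub_pos.2 hkm)).const_mul_atTop hD))

end RpowSubRpow

theorem rpow_sub_one_mul_sub_sub_eq_zero_iff {a p b A D c s : ℝ} (hs : 0 < s) :
    s ^ (p - 1) * A - c * s ^ (a - 1) - s ^ (b - 1) * D = 0 ↔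
      s ^ (p - a) * A - s ^ (b - a) * D = c := by
  have hfactor : s ^ (p - 1) * A - c * s ^ (a - 1) - s ^ (b - 1) * D =
      s ^ (a - 1) * (s ^ (p - a) * A - s ^ (b - a) * D - c) := by
    rw [show p - 1 = (a - 1) + (p - a) by ring, show b - 1 = (a - 1) + (b - a) by ring,
      Real.rpow_add hs, Real.rpow_add hs]
    ring
  rw [hfactor, mul_eq_zero, sub_eq_zero, or_iff_right (Real.rpow_pos_of_pos hs _).ne']

theorem stmt_3_general (A B C μ α β a p b : ℝ) (hA : 0 < A) (hB : 0 < B) (hC : 0 < C)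
    (hμ : 0 < μ) (hα : 0 < α) (hβ : 0 < β)
    (hap : a < p) (hpb : p < b) :
    let f : ℝ → ℝ := fun s => s ^ (p - 1) * A - μ * α * s ^ (a - 1) * B - β * s ^ (b - 1) * C
    let M : ℝ := sSup ((fun s => s ^ (p - a) * A - β * s ^ (b - a) * C) '' Set.Ioi (0 : ℝ))
    (μ * α * B < M →
      ∃ s₁ s₂ : ℝ, 0 < s₁ ∧ s₁ < s₂ ∧ f s₁ = 0 ∧ f s₂ = 0 ∧
        ∀ s, 0 < s → f s = 0 → s = s₁ ∨ s = s₂) ∧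
    (μ * α * B = M → ∃! s : ℝ, 0 < s ∧ f s = 0) ∧
    (M < μ * α * B → ∀ s, 0 < s → f s ≠ 0) := by
  intro f M
  set g : ℝ → ℝ := fun s => s ^ (p - a) * A - β * s ^ (b - a) * C
  have hf : ∀ s, 0 < s → (f s = 0 ↔ g s = μ * α * B) := fun s hs => by
    convert rpow_sub_one_mul_sub_sub_eq_zero_iff (a := a) (p := p) (b := b) (A := A)
      (D := β * C) (c := μ * α * B) hs using 2 <;> simp only [f, g] <;> ring
  have hk : 0 < p - a := sub_pos.2 hap
  have hkm : p - a < b - a := sub_lt_sub_right hpb a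
  have hD : 0 < β * C := mul_pos hβ hC
  have hg : (fun s : ℝ => s ^ (p - a) * A - s ^ (b - a) * (β * C)) = g := by
    funext s
    ring
  obtain ⟨s₀, hs₀, hmono, hanti⟩ :=
    hg ▸ exists_strictMonoOn_strictAntiOn_rpow_mul_sub_rpow_mul hk hkm hA hD
  have hmax : IsGreatest (g '' Ioi 0) (g s₀) :=
    isGreatest_image_Ioi_of_strictMonoOn_of_strictAntiOn hs₀ hmono hanti
  have hM : M = g s₀ := hmax.csSup_eq
  have hg0 : g 0 < μ * α * B := by
    simp only [g, Real.zero_rpow hk.ne', Real.zero_rpow (hk.trans hkm).ne', zero_mul, mul_zero,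
      sub_zero]
    positivity
  refine ⟨fun hlt => ?_, fun heq => ?_, fun hgt s hs hfs => ?_⟩
  · obtain ⟨s₁, s₂, hs₁, hs₁₂, hgs₁, hgs₂, honly⟩ :=
      exists_two_eq_of_strictMonoOn_of_strictAntiOn hs₀.le
        (hg ▸ continuous_rpow_mul_sub_rpow_mul hk.le (hk.trans hkm).le).continuousOn hmono hanti
        (hg ▸ tendsto_rpow_mul_sub_rpow_mul_atBot hk hkm hD) hg0 (hM ▸ hlt)
    exact ⟨s₁, s₂, hs₁, hs₁₂, (hf _ hs₁).2 hgs₁, (hf _ (hs₁.trans hs₁₂)).2 hgs₂,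
      fun s hs hfs => honly s hs ((hf s hs).1 hfs)⟩
  · refine ⟨s₀, ⟨hs₀, (hf _ hs₀).2 (hM ▸ heq).symm⟩, fun s ⟨hs, hfs⟩ => ?_⟩
    exact eq_of_strictMonoOn_of_strictAntiOn_of_eq hs.le hmono hanti
      (((hf s hs).1 hfs).trans (hM ▸ heq))
  · exact (hM ▸ hgt).not_ge (((hf s hs).1 hfs) ▸ hmax.2 ⟨s, hs, rfl⟩)

/-- Structure of critical points of the fibering map: the equation
Φ'(s) = s^{p−1}A − μα s^{a−1}B − β s^{b−1}C = 0 on (0,∞) has exactly two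
solutions if μαB is below the maximum of h(s) = s^{p−a}A − β s^{b−a}C,
exactly one if equal, and none if above. -/
theorem stmt_3 (A B C μ α β a p b : ℝ) (hA : 0 < A) (hB : 0 < B) (hC : 0 < C)
    (hμ : 0 < μ) (hα : 0 < α) (hβ : 0 < β)
    (ha : 0 < a) (hap : a < p) (hpb : p < b) :
    let f : ℝ → ℝ := fun s => s ^ (p - 1) * A - μ * α * s ^ (a - 1) * B - β * s ^ (b - 1) * C
    let M : ℝ := sSup ((fun s => s ^ (p - a) * A - β * s ^ (b - a) * C) '' Set.Ioi (0 : ℝ))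
    (μ * α * B < M →
      ∃ s₁ s₂ : ℝ, 0 < s₁ ∧ s₁ < s₂ ∧ f s₁ = 0 ∧ f s₂ = 0 ∧
        ∀ s, 0 < s → f s = 0 → s = s₁ ∨ s = s₂) ∧
    (μ * α * B = M → ∃! s : ℝ, 0 < s ∧ f s = 0) ∧
    (M < μ * α * B → ∀ s, 0 < s → f s ≠ 0) :=
  stmt_3_general A B C μ α β a p b hA hB hC hμ hα hβ hap hpb
end

section
/- Let 1 < p ≤ 2. For every η ∈ (1, p) there exists a constant C > 0 such that for all t ≥ 0 and all β ∈ ℝ: (1 + t² + 2t·cos β)^{p/2} ≤ 1 + t^p + p·t·cos β + C·t^η. -/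
/-- Inequality (e2.72): for 1 < p ≤ 2 and η ∈ (1, p) there exists C > 0 such
that (1 + t² + 2t cos β)^{p/2} ≤ 1 + t^p + p t cos β + C t^η for all t ≥ 0, β ∈ ℝ. -/
theorem stmt_11 (p η : ℝ) (hp1 : 1 < p) (hp2 : p ≤ 2) (hη1 : 1 < η) (hη2 : η < p) :
    ∃ C > (0 : ℝ), ∀ t : ℝ, 0 ≤ t → ∀ β : ℝ,
      (1 + t ^ 2 + 2 * t * Real.cos β) ^ (p / 2)
        ≤ 1 + t ^ p + p * t * Real.cos β + C * t ^ η := by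
  refine ⟨5, by norm_num, fun t ht β => ?_⟩
  set c := Real.cos β with hc
  have hc1 : c ≤ 1 := Real.cos_le_one β
  have hcm1 : -1 ≤ c := Real.neg_one_le_cos β
  have ha : (0:ℝ) ≤ 1 + t ^ 2 + 2 * t * c := by
    nlinarith [sq_nonneg (1 - t), mul_nonneg ht (by linarith : (0:ℝ) ≤ c + 1)]
  rcases le_total t 1 with h1 | h1
  · -- small t : use concavity (tangent line at 1)
    have hs : -1 ≤ t ^ 2 + 2 * t * c := by nlinarith
    have key := rpow_one_add_le_one_add_mul_self hs (p := p / 2) (by linarith) (by linarith)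
    have h2 : (1 + (t ^ 2 + 2 * t * c)) = 1 + t ^ 2 + 2 * t * c := by ring
    rw [h2] at key
    have htp : (0:ℝ) ≤ t ^ p := Real.rpow_nonneg ht p
    have ht2 : t ^ (2:ℝ) ≤ t ^ η := by
      rcases eq_or_lt_of_le ht with h0 | h0
      · rw [← h0, Real.zero_rpow (by norm_num), Real.zero_rpow (by linarith)]
      · exact Real.rpow_le_rpow_of_exponent_ge h0 h1 (by linarith)
    have ht2' : t ^ (2:ℝ) = t ^ 2 := by
      rw [show ((2:ℝ)) = ((2:ℕ):ℝ) by norm_num, Real.rpow_natCast]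
    rw [ht2'] at ht2
    have htη : (0:ℝ) ≤ t ^ η := Real.rpow_nonneg ht η
    calc (1 + t ^ 2 + 2 * t * c) ^ (p / 2)
        ≤ 1 + p / 2 * (t ^ 2 + 2 * t * c) := key
      _ ≤ 1 + t ^ p + p * t * c + 5 * t ^ η := by nlinarith
  · -- large t
    have ht0 : (0:ℝ) < t := lt_of_lt_of_le one_pos h1
    have hb : (1 + t ^ 2 + 2 * t * c) ≤ (1 + t) ^ 2 := by nlinarith
    have step1 : (1 + t ^ 2 + 2 * t * c) ^ (p / 2) ≤ ((1 + t) ^ 2) ^ (p / 2) :=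
      Real.rpow_le_rpow ha hb (by linarith)
    have h1t : (0:ℝ) ≤ 1 + t := by linarith
    have step2 : ((1 + t) ^ 2) ^ (p / 2) = (1 + t) ^ p := by
      rw [← Real.rpow_natCast (1 + t) 2, ← Real.rpow_mul h1t]
      norm_num
      congr 1
      ring
    -- (1+t)^p = t^p * (1+1/t)^p ≤ t^p * (1+1/t)^2 ≤ t^p * (1 + 3/t) = t^p + 3 t^(p-1)
    have hfac : (1 + t) = t * (1 + 1/t) := by field_simp; ring
    have hq : (0:ℝ) ≤ 1 + 1/t := by positivity
    have step3 : (1 + t) ^ p = t ^ p * (1 + 1/t) ^ p := by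
      rw [hfac, Real.mul_rpow ht hq]
    have hbase : (1:ℝ) ≤ 1 + 1/t := by
      have : (0:ℝ) < 1/t := by positivity
      linarith
    have step4 : (1 + 1/t) ^ p ≤ (1 + 1/t) ^ (2:ℝ) :=
      Real.rpow_le_rpow_of_exponent_le hbase hp2
    have step5 : (1 + 1/t) ^ (2:ℝ) ≤ 1 + 3/t := by
      rw [show ((2:ℝ)) = ((2:ℕ):ℝ) by norm_num, Real.rpow_natCast]
      have h : (1 + 3/t) - (1 + 1/t)^2 = (t - 1)/t^2 := by field_simp; ring
      have h2 : (0:ℝ) ≤ (t - 1)/t^2 := div_nonneg (by linarith) (by positivity)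
      linarith
    have htp : (0:ℝ) ≤ t ^ p := Real.rpow_nonneg ht p
    have step6 : (1 + t) ^ p ≤ t ^ p + 3 * (t ^ p / t) := by
      rw [step3]
      calc t ^ p * (1 + 1/t) ^ p ≤ t ^ p * (1 + 3/t) :=
            mul_le_mul_of_nonneg_left (le_trans step4 step5) htp
        _ = t ^ p + 3 * (t ^ p / t) := by field_simp
    have step7 : t ^ p / t = t ^ (p - 1) := by
      rw [Real.rpow_sub ht0, Real.rpow_one]
    have step8 : t ^ (p - 1) ≤ t ^ η :=
      Real.rpow_le_rpow_of_exponent_le h1 (by linarith)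
    have step9 : t ≤ t ^ η := by
      calc t = t ^ (1:ℝ) := (Real.rpow_one t).symm
        _ ≤ t ^ η := Real.rpow_le_rpow_of_exponent_le h1 hη1.le
    -- combine: LHS ≤ t^p + 3 t^η ≤ 1 + t^p + p t c + 5 t^η
    have hptc : -(p * t * c) ≤ 2 * t ^ η := by
      nlinarith [mul_nonneg (mul_nonneg (by linarith : (0:ℝ) ≤ p) ht) (by linarith : (0:ℝ) ≤ c + 1),
        mul_nonneg (by linarith : (0:ℝ) ≤ 2 - p) ht, step9]
    rw [step7] at step6
    calc (1 + t ^ 2 + 2 * t * c) ^ (p / 2)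
        ≤ (1 + t) ^ p := step2 ▸ step1
      _ ≤ t ^ p + 3 * t ^ (p - 1) := step6
      _ ≤ t ^ p + 3 * t ^ η := by linarith
      _ ≤ 1 + t ^ p + p * t * c + 5 * t ^ η := by linarith
end

section
/- Let p ≥ 3. There exists a constant C > 0 such that for all t ≥ 0 and all β ∈ ℝ: (1 + t² + 2t·cos β)^{p/2} ≤ 1 + t^p + p·t·cos β + C·(t² + t^{p−1}). -/
/-!
The quantity `1 + t ^ 2 + 2 * t * cos β` is `|1 + t e^{iβ}|²`. For `t ≤ 1` a second-order
Taylor bound for `x ^ (p / 2)` at `x = 1` gives `1 + p t cos β + O(t²)`. For `t ≥ 1`, factoring out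
`t²` reduces to the case `t⁻¹ ≤ 1` and gives `t ^ p + p t ^ (p - 1) cos β + O(t ^ (p - 2))`; since
`p ≥ 2`, the discrepancy `p (t ^ (p - 1) - t) cos β` is at most `p t ^ (p - 1)`.
-/

theorem one_add_pow_le_one_add_mul_add_mul_sq (n : ℕ) {M u : ℝ} (hM : 0 ≤ M) (hu : -1 ≤ u)
    (huM : u ≤ M) : (1 + u) ^ n ≤ 1 + n * u + n ^ 2 * (1 + M) ^ n * u ^ 2 := by
  induction n with
  | zero => simp
  | succ n ih =>
    have hK : 1 ≤ (1 + M) ^ (n + 1) := one_le_pow₀ (by linarith)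
    have hcube : n ^ 2 * (1 + M) ^ n * u ^ 3 ≤ n ^ 2 * (1 + M) ^ n * (M * u ^ 2) :=
      mul_le_mul_of_nonneg_left (by nlinarith [sq_nonneg u]) (by positivity)
    calc (1 + u) ^ (n + 1) = (1 + u) ^ n * (1 + u) := pow_succ _ _
      _ ≤ (1 + n * u + n ^ 2 * (1 + M) ^ n * u ^ 2) * (1 + u) :=
        mul_le_mul_of_nonneg_right ih (by linarith)
      _ ≤ 1 + ↑(n + 1) * u + ↑(n + 1) ^ 2 * (1 + M) ^ (n + 1) * u ^ 2 := by
        rw [pow_succ (1 + M) n] at hK ⊢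
        push_cast
        nlinarith [mul_le_mul_of_nonneg_right hK (mul_nonneg (by positivity : (0 : ℝ) ≤ 2 * n + 1)
          (sq_nonneg u))]

theorem exists_one_add_rpow_le_one_add_mul_add_mul_sq {q : ℝ} (hq : 0 ≤ q) {M : ℝ} (hM : 0 ≤ M) :
    ∃ D ≥ (0 : ℝ), ∀ u : ℝ, -1 ≤ u → u ≤ M → (1 + u) ^ q ≤ 1 + q * u + D * u ^ 2 := by
  -- split `q = n + r` with `n ∈ ℕ`; Bernoulli's inequality bounds `(1 + u) ^ r` for `r ≤ 1`
  obtain ⟨n, r, hr₀, hr₁, rfl⟩ : ∃ (n : ℕ) (r : ℝ), 0 ≤ r ∧ r ≤ 1 ∧ q = n + r :=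
    ⟨⌊q⌋₊, q - ⌊q⌋₊, by linarith [Nat.floor_le hq], by linarith [Nat.lt_floor_add_one q], by ring⟩
  set E : ℝ := n ^ 2 * (1 + M) ^ n
  have hE : 0 ≤ E := by positivity
  refine ⟨n + E * (1 + M), by positivity, fun u hu huM => ?_⟩
  have hu₀ : 0 ≤ 1 + u := by linarith
  have hcube : E * (r * u ^ 3) ≤ E * (M * u ^ 2) :=
    mul_le_mul_of_nonneg_left
      (by nlinarith [mul_le_mul_of_nonneg_right (show r * u ≤ M by nlinarith) (sq_nonneg u)]) hE
  calc (1 + u) ^ ((n : ℝ) + r) = (1 + u) ^ n * (1 + u) ^ r := by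
        rw [Real.rpow_add_of_nonneg hu₀ n.cast_nonneg hr₀, Real.rpow_natCast]
    _ ≤ (1 + n * u + E * u ^ 2) * (1 + r * u) :=
        mul_le_mul (one_add_pow_le_one_add_mul_add_mul_sq n hM hu huM)
          (rpow_one_add_le_one_add_mul_self hu hr₀ hr₁) (Real.rpow_nonneg hu₀ r)
          ((pow_nonneg hu₀ n).trans (one_add_pow_le_one_add_mul_add_mul_sq n hM hu huM))
    _ ≤ 1 + (n + r) * u + (n + E * (1 + M)) * u ^ 2 := by
        nlinarith [mul_nonneg (mul_nonneg (n.cast_nonneg : (0 : ℝ) ≤ n) (sub_nonneg.2 hr₁))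
          (sq_nonneg u)]

theorem one_add_sq_add_two_mul_nonneg {t s : ℝ} (ht : 0 ≤ t) (hs : -1 ≤ s) :
    0 ≤ 1 + t ^ 2 + 2 * t * s := by
  nlinarith [mul_nonneg ht (by linarith : 0 ≤ 1 + s), sq_nonneg (1 - t)]

theorem exists_rpow_one_add_sq_add_two_mul_le {p : ℝ} (hp : 0 ≤ p) :
    ∃ C ≥ (0 : ℝ), ∀ t : ℝ, 0 ≤ t → t ≤ 1 → ∀ s : ℝ, -1 ≤ s → s ≤ 1 →
      (1 + t ^ 2 + 2 * t * s) ^ (p / 2) ≤ 1 + p * t * s + C * t ^ 2 := by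
  obtain ⟨D, hD, hTaylor⟩ :=
    exists_one_add_rpow_le_one_add_mul_add_mul_sq (q := p / 2) (by positivity) zero_le_three
  refine ⟨p / 2 + 9 * D, by positivity, fun t ht₀ ht₁ s hs₁ hs₂ => ?_⟩
  have hsq : (t * (t + 2 * s)) ^ 2 ≤ 9 * t ^ 2 := by
    rw [mul_pow]
    nlinarith [sq_nonneg t, mul_nonneg (sq_nonneg t) (by nlinarith : 0 ≤ 9 - (t + 2 * s) ^ 2)]
  calc (1 + t ^ 2 + 2 * t * s) ^ (p / 2) = (1 + t * (t + 2 * s)) ^ (p / 2) := by ring_nf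
    _ ≤ 1 + p / 2 * (t * (t + 2 * s)) + D * (t * (t + 2 * s)) ^ 2 :=
        hTaylor _ (by nlinarith [one_add_sq_add_two_mul_nonneg ht₀ hs₁]) (by nlinarith)
    _ ≤ 1 + p * t * s + (p / 2 + 9 * D) * t ^ 2 := by
        nlinarith [mul_le_mul_of_nonneg_left hsq hD]

theorem rpow_one_add_sq_add_two_mul_eq_rpow_mul_inv {t : ℝ} (ht : 0 < t) {s : ℝ} (hs : -1 ≤ s)
    (p : ℝ) : (1 + t ^ 2 + 2 * t * s) ^ (p / 2)
      = t ^ p * (1 + t⁻¹ ^ 2 + 2 * t⁻¹ * s) ^ (p / 2) := by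
  have hfac : 1 + t ^ 2 + 2 * t * s = t ^ 2 * (1 + t⁻¹ ^ 2 + 2 * t⁻¹ * s) := by
    field_simp
    ring
  rw [hfac, Real.mul_rpow (by positivity) (one_add_sq_add_two_mul_nonneg (by positivity) hs),
    ← Real.rpow_natCast_mul ht.le]
  norm_num [mul_div_cancel₀]

theorem rpow_one_add_sq_add_two_mul_le_of_one_le {p C : ℝ}
    (hsmall : ∀ t : ℝ, 0 ≤ t → t ≤ 1 → ∀ s : ℝ, -1 ≤ s → s ≤ 1 →
      (1 + t ^ 2 + 2 * t * s) ^ (p / 2) ≤ 1 + p * t * s + C * t ^ 2)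
    {t : ℝ} (ht : 1 ≤ t) {s : ℝ} (hs₁ : -1 ≤ s) (hs₂ : s ≤ 1) :
    (1 + t ^ 2 + 2 * t * s) ^ (p / 2) ≤ t ^ p + p * t ^ (p - 1) * s + C * t ^ (p - 2) := by
  have ht₀ : 0 < t := by linarith
  rw [rpow_one_add_sq_add_two_mul_eq_rpow_mul_inv ht₀ hs₁]
  calc t ^ p * (1 + t⁻¹ ^ 2 + 2 * t⁻¹ * s) ^ (p / 2)
      ≤ t ^ p * (1 + p * t⁻¹ * s + C * t⁻¹ ^ 2) :=
        mul_le_mul_of_nonneg_left (hsmall _ (by positivity) (inv_le_one_of_one_le₀ ht) s hs₁ hs₂)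
          (Real.rpow_nonneg ht₀.le p)
    _ = t ^ p + p * t ^ (p - 1) * s + C * t ^ (p - 2) := by
        rw [Real.rpow_sub_one ht₀.ne', show (2 : ℝ) = (2 : ℕ) by norm_num,
          Real.rpow_sub_natCast ht₀.ne']
        field_simp

/-- Inequality (e2.23): for p ≥ 3 there exists C > 0 such that
(1 + t² + 2t cos β)^{p/2} ≤ 1 + t^p + p t cos β + C(t² + t^{p−1})
for all t ≥ 0, β ∈ ℝ. -/
theorem stmt_12 (p : ℝ) (hp : 3 ≤ p) :
    ∃ C > (0 : ℝ), ∀ t : ℝ, 0 ≤ t → ∀ β : ℝ,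
      (1 + t ^ 2 + 2 * t * Real.cos β) ^ (p / 2)
        ≤ 1 + t ^ p + p * t * Real.cos β + C * (t ^ 2 + t ^ (p - 1)) := by
  obtain ⟨C, hC, hsmall⟩ := exists_rpow_one_add_sq_add_two_mul_le (p := p) (by linarith)
  refine ⟨C + p, by linarith, fun t ht₀ β => ?_⟩
  have hs₁ := Real.neg_one_le_cos β
  have hs₂ := Real.cos_le_one β
  have htp : 0 ≤ t ^ p := Real.rpow_nonneg ht₀ p
  have htp₁ : 0 ≤ t ^ (p - 1) := Real.rpow_nonneg ht₀ (p - 1)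
  rcases le_total t 1 with ht₁ | ht₁
  · nlinarith [hsmall t ht₀ ht₁ _ hs₁ hs₂, sq_nonneg t]
  · have hlarge := rpow_one_add_sq_add_two_mul_le_of_one_le hsmall ht₁ hs₁ hs₂
    have hp₂ : t ^ (p - 2) ≤ t ^ (p - 1) := Real.rpow_le_rpow_of_exponent_le ht₁ (by linarith)
    have hp₁ : t ≤ t ^ (p - 1) := by
      simpa using Real.rpow_le_rpow_of_exponent_le ht₁ (by linarith : (1 : ℝ) ≤ p - 1)
    nlinarith [mul_nonneg (sub_nonneg.2 hs₂) (sub_nonneg.2 hp₁), mul_le_mul_of_nonneg_left hp₂ hC]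
end
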